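/- arXiv:1806.10386 — 7 statements merged into one kernel-verified Lean document; each statement's English description precedes it below -/
import Mathlib

section
/- Let A be a commutative pointed monoid and I an ideal of A. The Frobenius closure I^{Frob} = {x ∈ A : ∃ n ∈ ℕ, x^n ∈ I^{[n]}}, where I^{[n]} = {a·y^n : a ∈ A, y ∈ I}, is a closure operation: it satisfies extension I ⊆ I^{Frob}, order-preservation, and idempotence (I^{Frob})^{Frob} = I^{Frob}. -/
/-- An ideal of a commutative pointed monoid. -/
def IsMIdeal {A : Type*} [CommMonoidWithZero A] (I : Set A) : Prop :=
  (0 : A) ∈ I ∧ ∀ x ∈ I, ∀ a : A, x * a ∈ I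

/-- `I^{[n]} = {a * y^n : a ∈ A, y ∈ I}`. -/
def bracketPow {A : Type*} [CommMonoid A] (I : Set A) (n : ℕ) : Set A :=
  {x : A | ∃ a : A, ∃ y ∈ I, x = a * y ^ n}

/-- The Frobenius closure `I^{Frob} = {x : ∃ n ≥ 1, x^n ∈ I^{[n]}}`. -/
def frobClosure {A : Type*} [CommMonoid A] (I : Set A) : Set A :=
  {x : A | ∃ n : ℕ, 0 < n ∧ x ^ n ∈ bracketPow I n}

theorem frobClosure_is_closure_operation {A : Type*} [CommMonoidWithZero A] :
    (∀ I : Set A, IsMIdeal I → I ⊆ frobClosure I) ∧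
    (∀ I J : Set A, IsMIdeal I → IsMIdeal J → I ⊆ J → frobClosure I ⊆ frobClosure J) ∧
    (∀ I : Set A, IsMIdeal I → frobClosure (frobClosure I) = frobClosure I) := by
  refine ⟨fun I _ x hx => ⟨1, one_pos, 1, x, hx, by rw [one_mul]⟩,
    fun I J _ _ hIJ x ⟨n, hn, a, y, hy, hxy⟩ => ⟨n, hn, a, y, hIJ hy, hxy⟩,
    fun I hI => Set.Subset.antisymm ?_ ?_⟩
  · rintro x ⟨n, hn, a, y, ⟨m, hm, b, z, hz, hyz⟩, hxy⟩
    refine ⟨n * m, Nat.mul_pos hn hm, a ^ m * b ^ n, z, hz, ?_⟩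
    calc x ^ (n * m) = (x ^ n) ^ m := by rw [pow_mul]
      _ = (a * y ^ n) ^ m := by rw [hxy]
      _ = a ^ m * (y ^ m) ^ n := by rw [mul_pow, ← pow_mul, mul_comm n m, pow_mul]
      _ = a ^ m * (b * z ^ m) ^ n := by rw [hyz]
      _ = a ^ m * b ^ n * z ^ (n * m) := by rw [mul_pow, ← pow_mul, mul_comm m n, mul_assoc]
  · intro x hx
    exact ⟨1, one_pos, 1, x, hx, by rw [one_mul]⟩
end

section
/- Frobenius closure commutes with localization: for a commutative pointed monoid A, a multiplicative set S ⊆ A, and an ideal I of A, we have S⁻¹(I^{Frob}) = (S⁻¹I)^{Frob} as ideals of S⁻¹A. -/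
/-- The ideal of fractions `S⁻¹I` in the localization `S⁻¹A`. -/
def locIdeal {A : Type*} [CommMonoidWithZero A] (S : Submonoid A) (I : Set A) :
    Set (Localization S) :=
  {z : Localization S | ∃ x ∈ I, ∃ s : S, z = Localization.mk x s}

theorem frobClosure_localization {A : Type*} [CommMonoidWithZero A] (S : Submonoid A)
    (I : Set A) (hI : IsMIdeal I) :
    locIdeal S (frobClosure I) = frobClosure (locIdeal S I) := by
  ext z
  constructor
  · rintro ⟨x, ⟨n, hn, a, y, hy, hxy⟩, s, rfl⟩
    refine ⟨n, hn, Localization.mk a (s ^ n), Localization.mk y 1, ⟨y, hy, 1, rfl⟩, ?_⟩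
    rw [Localization.mk_pow, Localization.mk_pow, Localization.mk_mul, hxy, one_pow, mul_one]
  · rintro ⟨n, hn, b, w, ⟨y, hy, t, rfl⟩, hzw⟩
    obtain ⟨x, s, rfl⟩ : ∃ x s, z = Localization.mk x s :=
      Localization.induction_on z fun p => ⟨p.1, p.2, rfl⟩
    obtain ⟨a, u, rfl⟩ : ∃ a u, b = Localization.mk a u :=
      Localization.induction_on b fun p => ⟨p.1, p.2, rfl⟩
    rw [Localization.mk_pow, Localization.mk_pow, Localization.mk_mul,
      Localization.mk_eq_mk_iff, Localization.r_iff_exists] at hzw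
    obtain ⟨c, hc⟩ := hzw
    simp only [Submonoid.coe_mul, SubmonoidClass.coe_pow] at hc
    obtain ⟨m, rfl⟩ := Nat.exists_eq_add_of_lt hn
    rw [zero_add] at *
    refine ⟨x * ((u : A) * t * c), ⟨m + 1, hn,
      a * (s : A) ^ (m + 1) * (u : A) ^ m * (c : A) ^ (m + 1), y, hy, ?_⟩, s * (u * t * c), ?_⟩
    · calc (x * ((u : A) * t * c)) ^ (m + 1)
          = ((c : A) * ((u : A) * (t : A) ^ (m + 1) * x ^ (m + 1))) * ((u : A) ^ m * (c : A) ^ m) := by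
            rw [mul_pow, mul_pow, mul_pow, pow_succ (u : A), pow_succ (c : A)]
            simp only [mul_comm, mul_assoc, mul_left_comm]
        _ = ((c : A) * ((s : A) ^ (m + 1) * (a * y ^ (m + 1)))) * ((u : A) ^ m * (c : A) ^ m) := by
            rw [hc]
        _ = a * (s : A) ^ (m + 1) * (u : A) ^ m * (c : A) ^ (m + 1) * y ^ (m + 1) := by
            rw [pow_succ (c : A)]; simp only [mul_comm, mul_assoc, mul_left_comm]
    · rw [Localization.mk_eq_mk_iff, Localization.r_iff_exists]
      refine ⟨1, ?_⟩
      simp only [Submonoid.coe_mul, OneMemClass.coe_one, one_mul]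
      simp only [mul_comm, mul_assoc, mul_left_comm]
end

section
/- Let A be a commutative pointed monoid and I an ideal. The integral closure I^{int} = {x ∈ A : ∃ n ∈ ℕ, x^n ∈ I^n}, where I^n is the set of products of n elements of I, is a closure operation: extension, order-preservation, and idempotence hold. -/
/-- `I^n`: the set of products of `n` elements of `I`. -/
def setPow {A : Type*} [CommMonoid A] (I : Set A) (n : ℕ) : Set A :=
  {x : A | ∃ f : Fin n → A, (∀ i, f i ∈ I) ∧ x = ∏ i, f i}

/-- The integral closure `I^{int} = {x : ∃ n ≥ 1, x^n ∈ I^n}`. -/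
def intClosure {A : Type*} [CommMonoid A] (I : Set A) : Set A :=
  {x : A | ∃ n : ℕ, 0 < n ∧ x ^ n ∈ setPow I n}

lemma one_mem_setPow_zero {A : Type*} [CommMonoid A] (I : Set A) :
    (1 : A) ∈ setPow I 0 :=
  ⟨Fin.elim0, fun i => i.elim0, by simp⟩

lemma mul_mem_setPow {A : Type*} [CommMonoid A] {I : Set A} {m k : ℕ} {a b : A}
    (ha : a ∈ setPow I m) (hb : b ∈ setPow I k) : a * b ∈ setPow I (m + k) := by
  obtain ⟨f, hf, rfl⟩ := ha
  obtain ⟨g, hg, rfl⟩ := hb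
  refine ⟨Fin.append f g, fun i => ?_, ?_⟩
  · refine Fin.addCases (fun j => ?_) (fun j => ?_) i
    · simpa using hf j
    · simpa using hg j
  · rw [Fin.prod_univ_add]
    simp

lemma pow_mem_setPow {A : Type*} [CommMonoid A] {I : Set A} {m : ℕ} {a : A}
    (ha : a ∈ setPow I m) (k : ℕ) : a ^ k ∈ setPow I (m * k) := by
  induction k with
  | zero => simpa using one_mem_setPow_zero I
  | succ k ih =>
      have := mul_mem_setPow ih ha
      rw [pow_succ]
      simpa [Nat.mul_succ] using this

lemma prod_mem_setPow {A : Type*} [CommMonoid A] {I : Set A} {ι : Type*}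
    (s : Finset ι) (f : ι → A) (g : ι → ℕ)
    (h : ∀ i ∈ s, f i ∈ setPow I (g i)) :
    (∏ i ∈ s, f i) ∈ setPow I (∑ i ∈ s, g i) := by
  classical
  induction s using Finset.cons_induction with
  | empty => simpa using one_mem_setPow_zero I
  | cons a s ha ih =>
      rw [Finset.prod_cons, Finset.sum_cons]
      exact mul_mem_setPow (h a (Finset.mem_cons_self a s))
        (ih fun i hi => h i (Finset.mem_cons_of_mem hi))

theorem intClosure_is_closure_operation {A : Type*} [CommMonoidWithZero A] :
    (∀ I : Set A, IsMIdeal I → I ⊆ intClosure I) ∧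
    (∀ I J : Set A, IsMIdeal I → IsMIdeal J → I ⊆ J → intClosure I ⊆ intClosure J) ∧
    (∀ I : Set A, IsMIdeal I → intClosure (intClosure I) = intClosure I) := by
  classical
  have hext : ∀ I : Set A, I ⊆ intClosure I := by
    intro I x hx
    exact ⟨1, one_pos, fun _ => x, fun _ => hx, by simp⟩
  have hmono : ∀ I J : Set A, I ⊆ J → intClosure I ⊆ intClosure J := by
    intro I J hIJ x ⟨n, hn, f, hf, hx⟩
    exact ⟨n, hn, f, fun i => hIJ (hf i), hx⟩
  refine ⟨fun I _ => hext I, fun I J _ _ h => hmono I J h, fun I _ => ?_⟩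
  apply Set.Subset.antisymm _ (hext (intClosure I))
  rintro x ⟨n, hn, f, hf, hx⟩
  choose m hm hfm using hf
  set N : ℕ := ∏ i, m i with hN
  have hNpos : 0 < N := Finset.prod_pos (fun i _ => hm i)
  refine ⟨n * N, Nat.mul_pos hn hNpos, ?_⟩
  have key : ∀ i, (f i) ^ N ∈ setPow I N := by
    intro i
    have hdvd : m i ∣ N := Finset.dvd_prod_of_mem m (Finset.mem_univ i)
    have := pow_mem_setPow (hfm i) (N / m i)
    rw [Nat.mul_div_cancel' hdvd] at this
    rw [← pow_mul, Nat.mul_div_cancel' hdvd] at this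
    exact this
  have : (∏ i, (f i) ^ N) ∈ setPow I (∑ _i : Fin n, N) :=
    prod_mem_setPow Finset.univ _ _ (fun i _ => key i)
  have hsum : (∑ _i : Fin n, N) = n * N := by simp [Finset.sum_const, mul_comm]
  rw [hsum] at this
  rw [Finset.prod_pow] at this
  rwa [pow_mul, hx]
end

section
/- Integral closure of ideals of monoids commutes with localization: for a commutative pointed monoid A, a multiplicative set S ⊆ A, and an ideal I, S⁻¹(I^{int}) = (S⁻¹I)^{int}. -/
private lemma mk_prod_aux {A : Type*} [CommMonoidWithZero A] (S : Submonoid A)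
    (n : ℕ) (f : Fin n → A) (s : Fin n → S) :
    ∏ i, Localization.mk (f i) (s i) = Localization.mk (∏ i, f i) (∏ i, s i) := by
  induction n with
  | zero => simp [Localization.mk_one]
  | succ m ih =>
      rw [Fin.prod_univ_succ, Fin.prod_univ_succ, Fin.prod_univ_succ, ih,
        Localization.mk_mul]

theorem intClosure_localization {A : Type*} [CommMonoidWithZero A] (S : Submonoid A)
    (I : Set A) (hI : IsMIdeal I) :
    locIdeal S (intClosure I) = intClosure (locIdeal S I) := by
  ext z
  constructor
  · rintro ⟨x, ⟨n, hn, f, hf, hfx⟩, s, rfl⟩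
    refine ⟨n, hn, fun i => Localization.mk (f i) s, fun i => ⟨f i, hf i, s, rfl⟩, ?_⟩
    rw [Localization.mk_pow, mk_prod_aux, ← hfx, Finset.prod_const, Finset.card_univ,
      Fintype.card_fin]
  · rintro ⟨n, hn, g, hg, hgz⟩
    obtain ⟨a, t, rfl⟩ : ∃ a t, z = Localization.mk a t :=
      Localization.induction_on z fun p => ⟨p.1, p.2, rfl⟩
    choose x hx s hs using hg
    rw [Localization.mk_pow, funext hs, mk_prod_aux, Localization.mk_eq_mk_iff,
      Localization.r_iff_exists] at hgz
    obtain ⟨u, hu⟩ := hgz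
    simp only at hu
    obtain ⟨m, rfl⟩ : ∃ m, n = m + 1 := ⟨n - 1, (Nat.succ_pred_eq_of_pos hn).symm⟩
    set c : A := (u : A) * ∏ i, (s i : A) with hc
    have hcS : c ∈ S := S.mul_mem u.2 (Submonoid.prod_mem S fun i _ => (s i).2)
    -- witness: (c * a) ^ (m+1) = (c^m * u * t^(m+1)) * ∏ x i
    have hu' : (u : A) * ((∏ i, (s i : A)) * a ^ (m + 1))
        = (u : A) * ((t : A) ^ (m + 1) * ∏ i, x i) := by simpa using hu
    have h1 : c * a ^ (m + 1) = (u : A) * ((t : A) ^ (m + 1) * ∏ i, x i) := by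
      rw [hc, mul_assoc]; exact hu'
    have key : (c * a) ^ (m + 1) = (c ^ m * (u : A) * (t : A) ^ (m + 1)) * ∏ i, x i := by
      rw [mul_pow, pow_succ, mul_comm (c ^ m) c, mul_assoc, mul_left_comm c (c ^ m), h1]
      simp [mul_assoc]
    refine ⟨c * a, ⟨m + 1, Nat.succ_pos m, ?_⟩, ⟨c, hcS⟩ * t, ?_⟩
    · refine ⟨fun i => if i = 0 then x 0 * (c ^ m * (u : A) * (t : A) ^ (m + 1)) else x i,
        fun i => ?_, ?_⟩
      · by_cases h : i = 0 <;> simp [h, hI.2 _ (hx _), hx i]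
      · rw [key, Fin.prod_univ_succ, Fin.prod_univ_succ]
        simp [Fin.succ_ne_zero, mul_comm, mul_left_comm, mul_assoc]
    · rw [Localization.mk_eq_mk_iff, Localization.r_iff_exists]
      exact ⟨1, by push_cast; simp [mul_comm, mul_left_comm, mul_assoc]⟩
end

section
/- Let A be a Noetherian cancellative commutative pointed monoid and I an ideal. The tight closure I^{tight} = {x ∈ A : ∃ a ∈ A, a ≠ 0, such that a·x^n ∈ I^{[n]} for all sufficiently large n} satisfies idempotence: (I^{tight})^{tight} = I^{tight}. -/
/-- A finitely generated ideal. -/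
def IsFGMIdeal {A : Type*} [CommMonoidWithZero A] (I : Set A) : Prop :=
  IsMIdeal I ∧ ∃ S : Finset A, ↑S ⊆ I ∧ ∀ x ∈ I, ∃ a : A, ∃ y ∈ S, x = a * y

/-- The tight closure `I^{tight} = {x : ∃ a ≠ 0, a * x^n ∈ I^{[n]} for all n ≫ 0}`. -/
def tightClosure {A : Type*} [CommMonoidWithZero A] (I : Set A) : Set A :=
  {x : A | ∃ a : A, a ≠ 0 ∧ ∃ N : ℕ, ∀ n ≥ N, a * x ^ n ∈ bracketPow I n}

theorem tightClosure_idempotent {A : Type*} [CommMonoidWithZero A]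
    (hcanc : ∀ a b c : A, a ≠ 0 → a * b = a * c → b = c)
    (hnoeth : ∀ J : Set A, IsMIdeal J → IsFGMIdeal J)
    (I : Set A) (hI : IsMIdeal I) :
    tightClosure (tightClosure I) = tightClosure I := by
  classical
  haveI : NoZeroDivisors A := ⟨fun {a b} h => by
    by_cases ha : a = 0
    · exact Or.inl ha
    · exact Or.inr (hcanc a b 0 ha (by simpa using h))⟩
  apply Set.Subset.antisymm
  · intro x hx
    obtain ⟨c, hc, N, hN⟩ := hx
    have hideal : IsMIdeal (tightClosure I) := by
      constructor
      · exact ⟨c, hc, 1, fun n hn => ⟨c, 0, hI.1, rfl⟩⟩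
      · intro z hz b
        obtain ⟨a, ha, M, hM⟩ := hz
        refine ⟨a, ha, M, fun n hn => ?_⟩
        obtain ⟨a', y, hy, he⟩ := hM n hn
        refine ⟨a' * b ^ n, y, hy, ?_⟩
        calc a * (z * b) ^ n = (a * z ^ n) * b ^ n := by
              rw [mul_pow, ← mul_assoc]
          _ = (a' * y ^ n) * b ^ n := by rw [he]
          _ = a' * b ^ n * y ^ n := by
              rw [mul_assoc, mul_comm (y ^ n), ← mul_assoc]
    obtain ⟨_, S, hSsub, hSgen⟩ := hnoeth _ hideal
    have hw : ∀ z : A, ∃ a : A, a ≠ 0 ∧ ∃ M : ℕ,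
        ∀ n ≥ M, z ∈ S → a * z ^ n ∈ bracketPow I n := by
      intro z
      by_cases hz : z ∈ S
      · obtain ⟨a, ha, M, hM⟩ := hSsub hz
        exact ⟨a, ha, M, fun n hn _ => hM n hn⟩
      · exact ⟨c, hc, 0, fun n _ hzS => absurd hzS hz⟩
    choose w hw0 M hM using hw
    set d := ∏ z ∈ S, w z with hd_def
    haveI : Nontrivial A := ⟨⟨c, 0, hc⟩⟩
    have hd : d ≠ 0 := Finset.prod_ne_zero_iff.mpr fun z _ => hw0 z
    set Nmax := S.sup M with hNmax
    have key : ∀ z ∈ S, ∀ n ≥ Nmax, d * z ^ n ∈ bracketPow I n := by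
      intro z hz n hn
      obtain ⟨a', y, hy, he⟩ :=
        hM z n (le_trans (Finset.le_sup hz) hn) hz
      refine ⟨(∏ t ∈ S.erase z, w t) * a', y, hy, ?_⟩
      calc d * z ^ n = (w z * ∏ t ∈ S.erase z, w t) * z ^ n := by
            rw [hd_def, Finset.mul_prod_erase S w hz]
        _ = (∏ t ∈ S.erase z, w t) * (w z * z ^ n) := by
            rw [mul_comm (w z), mul_assoc]
        _ = (∏ t ∈ S.erase z, w t) * (a' * y ^ n) := by rw [he]
        _ = (∏ t ∈ S.erase z, w t) * a' * y ^ n := by rw [mul_assoc]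
    refine ⟨d * c, mul_ne_zero hd hc, max N Nmax, fun n hn => ?_⟩
    obtain ⟨a, y, hy, he⟩ := hN n (le_trans (le_max_left _ _) hn)
    obtain ⟨b, z, hzS, hzy⟩ := hSgen y hy
    obtain ⟨e, u, hu, heu⟩ := key z hzS n (le_trans (le_max_right _ _) hn)
    refine ⟨a * b ^ n * e, u, hu, ?_⟩
    calc d * c * x ^ n = d * (c * x ^ n) := by rw [mul_assoc]
      _ = d * (a * (b * z) ^ n) := by rw [he, hzy]
      _ = a * b ^ n * (d * z ^ n) := by
          rw [mul_pow]
          simp only [mul_comm, mul_left_comm, mul_assoc]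
      _ = a * b ^ n * (e * u ^ n) := by rw [heu]
      _ = a * b ^ n * e * u ^ n := by
          simp only [mul_assoc]
  · intro x hx
    obtain ⟨a, ha, N, hN⟩ := hx
    refine ⟨a, ha, N, fun n hn => ?_⟩
    obtain ⟨b, y, hy, he⟩ := hN n hn
    exact ⟨b, y, ⟨a, ha, 0, fun m _ => ⟨a, y, hy, rfl⟩⟩, he⟩
end

section
/- Let Γ be a totally ordered abelian group, Γ' ⊆ Γ a convex subgroup, γ ∈ Γ cofinal for Γ', and Δ ⊊ Γ' a proper convex subgroup. Then δγ is cofinal for Γ' for every δ ∈ Δ. -/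
/-- A convex subgroup of a totally ordered abelian group. -/
def IsConvexSubgroup {Γ : Type*} [CommGroup Γ] [LinearOrder Γ] [IsOrderedMonoid Γ] (H : Subgroup Γ) : Prop :=
  ∀ γ δ : Γ, γ ≤ δ → δ ≤ 1 → γ ∈ H → δ ∈ H

/-- `γ` is cofinal for the subgroup `H`: for every `h ∈ H` some power `γ^n < h`. -/
def IsCofinalFor' {Γ : Type*} [CommGroup Γ] [LinearOrder Γ] [IsOrderedMonoid Γ] (γ : Γ) (H : Subgroup Γ) : Prop :=
  ∀ h ∈ H, ∃ n : ℕ, 0 < n ∧ γ ^ n < h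

/-!
Pick `ε ∈ Γ' \ Δ` with `ε < 1`. By convexity of `Δ`, `ε` lies below every element of `Δ`, in
particular below `δ⁻¹ ^ n`, so `δ ^ n * ε < 1` for all `n`. Given `h ∈ Γ'`, choose `n` with
`γ ^ n < h * ε`; then `(δ * γ) ^ n = δ ^ n * γ ^ n < (δ ^ n * ε) * h < h`.
-/

section

variable {Γ : Type*} [CommGroup Γ] [LinearOrder Γ] [IsOrderedMonoid Γ]

theorem Subgroup.exists_lt_one_mem_notMem_of_lt {Δ Γ' : Subgroup Γ} (hlt : Δ < Γ') :
    ∃ ε ∈ Γ', ε ∉ Δ ∧ ε < 1 := by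
  obtain ⟨ε, hεΓ', hεΔ⟩ := SetLike.exists_of_lt hlt
  rcases lt_trichotomy ε 1 with hε | rfl | hε
  · exact ⟨ε, hεΓ', hεΔ, hε⟩
  · exact absurd Δ.one_mem hεΔ
  · exact ⟨ε⁻¹, Γ'.inv_mem hεΓ', fun h ↦ hεΔ (inv_mem_iff.mp h), inv_lt_one'.mpr hε⟩

theorem IsConvexSubgroup.lt_of_notMem {Δ : Subgroup Γ} (hΔ : IsConvexSubgroup Δ) {ε d : Γ}
    (hε : ε ≤ 1) (hεΔ : ε ∉ Δ) (hd : d ∈ Δ) : ε < d :=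
  lt_of_not_ge fun hdε ↦ hεΔ (hΔ d ε hdε hε hd)

theorem IsConvexSubgroup.pow_mul_lt_one_of_notMem {Δ : Subgroup Γ} (hΔ : IsConvexSubgroup Δ)
    {ε δ : Γ} (hε : ε ≤ 1) (hεΔ : ε ∉ Δ) (hδ : δ ∈ Δ) (n : ℕ) : δ ^ n * ε < 1 := by
  have : ε < (δ ^ n)⁻¹ := hΔ.lt_of_notMem hε hεΔ (Δ.inv_mem (Δ.pow_mem hδ n))
  simpa using mul_lt_mul_right this (δ ^ n)

end

theorem mul_cofinal_general {Γ : Type*} [CommGroup Γ] [LinearOrder Γ] [IsOrderedMonoid Γ] (Γ' Δ : Subgroup Γ)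
    (hΔ : IsConvexSubgroup Δ) (hlt : Δ < Γ')
    (γ : Γ) (hγ : IsCofinalFor' γ Γ') :
    ∀ δ ∈ Δ, IsCofinalFor' (δ * γ) Γ' := by
  intro δ hδ h hh
  obtain ⟨ε, hεΓ', hεΔ, hε⟩ := Subgroup.exists_lt_one_mem_notMem_of_lt hlt
  obtain ⟨n, hn, hγn⟩ := hγ (h * ε) (Γ'.mul_mem hh hεΓ')
  refine ⟨n, hn, ?_⟩
  calc (δ * γ) ^ n = δ ^ n * γ ^ n := mul_pow δ γ n
    _ < δ ^ n * (h * ε) := mul_lt_mul_right hγn _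
    _ = (δ ^ n * ε) * h := by rw [mul_comm h ε, mul_assoc]
    _ < 1 * h := mul_lt_mul_left (hΔ.pow_mul_lt_one_of_notMem hε.le hεΔ hδ n) h
    _ = h := one_mul h

theorem mul_cofinal {Γ : Type*} [CommGroup Γ] [LinearOrder Γ] [IsOrderedMonoid Γ] (Γ' Δ : Subgroup Γ)
    (hΓ' : IsConvexSubgroup Γ') (hΔ : IsConvexSubgroup Δ) (hlt : Δ < Γ')
    (γ : Γ) (hγ : IsCofinalFor' γ Γ') :
    ∀ δ ∈ Δ, IsCofinalFor' (δ * γ) Γ' :=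
  mul_cofinal_general Γ' Δ hΔ hlt γ hγ
end

section
/- Let v be a valuation on a commutative pointed monoid A with value group Γ_v, and let H ⊊ Γ_v be a convex subgroup strictly containing cΓ_v. Then 𝔍 := {x ∈ A : v(x) is cofinal for H} is a radical ideal of A (i.e., an ideal with √𝔍 = 𝔍). -/
/-- `γ` is cofinal for the subgroup `H`: for every `h ∈ H` some power `γ^n < h`. -/
def IsCofinalForSubgroup {Γ : Type*} [CommGroup Γ] [LinearOrder Γ] [IsOrderedMonoid Γ] (γ : Γ) (H : Subgroup Γ) : Prop :=
  ∀ h ∈ H, ∃ n : ℕ, 0 < n ∧ γ ^ n < h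

/-- The value group of a valuation: the subgroup generated by the nonzero values. -/
def valueGroup {A Γ : Type*} [CommMonoidWithZero A] [CommGroup Γ] [LinearOrder Γ] [IsOrderedMonoid Γ]
    (v : A → WithZero Γ) : Subgroup Γ :=
  Subgroup.closure {γ : Γ | ∃ a : A, v a = (γ : WithZero Γ)}

/-- The characteristic subgroup `cΓ_v`: the smallest convex subgroup containing all
values `v x ≥ 1`. -/
def charSubgroup {A Γ : Type*} [CommMonoidWithZero A] [CommGroup Γ] [LinearOrder Γ] [IsOrderedMonoid Γ]
    (v : A → WithZero Γ) : Subgroup Γ :=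
  sInf {K : Subgroup Γ | IsConvexSubgroup K ∧
    ∀ (γ : Γ) (x : A), v x = (γ : WithZero Γ) → 1 ≤ γ → γ ∈ K}

/-- An element of `Γ ∪ {0}` is cofinal for a subgroup `H` if some power of it is
less than every element of `H`. -/
def IsCofinalFor₀ {Γ : Type*} [CommGroup Γ] [LinearOrder Γ] [IsOrderedMonoid Γ] (g : WithZero Γ)
    (H : Subgroup Γ) : Prop :=
  ∀ h ∈ H, ∃ n : ℕ, 0 < n ∧ g ^ n < ((h : Γ) : WithZero Γ)

/-!
Since `H` strictly contains the convex subgroup `cΓ_v`, it has an element `g ≤ 1` outside it,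
and convexity puts all of `cΓ_v` below `g⁻¹`. So for every `a` the powers of `v a` are bounded
by an element of `H`: by `1` if `v a ≤ 1`, and by `g⁻¹` otherwise, as they then lie in `cΓ_v`.
Multiplying a value cofinal for `H` by a value with powers bounded in `H` keeps it cofinal.
The ideal is radical because a power `γ ^ n` is cofinal for `H` exactly when `γ` is.
-/

section

variable {Γ : Type*} [CommGroup Γ] [LinearOrder Γ] [IsOrderedMonoid Γ]

theorem Subgroup.exists_mem_notMem_le_one_of_lt {K H : Subgroup Γ} (hKH : K < H) :
    ∃ g ∈ H, g ∉ K ∧ g ≤ 1 := by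
  obtain ⟨g, hgH, hgK⟩ := SetLike.exists_of_lt hKH
  rcases le_total g 1 with hg | hg
  · exact ⟨g, hgH, hgK, hg⟩
  · exact ⟨g⁻¹, H.inv_mem hgH, fun h => hgK (inv_inv g ▸ K.inv_mem h), inv_le_one'.2 hg⟩

theorem IsConvexSubgroup.lt_inv_of_notMem {K : Subgroup Γ} (hK : IsConvexSubgroup K) {g k : Γ}
    (hgK : g ∉ K) (hg : g ≤ 1) (hk : k ∈ K) : k < g⁻¹ := by
  by_contra! hle
  exact hgK (hK k⁻¹ g (inv_le_of_inv_le' hle) hg (K.inv_mem hk))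

namespace IsCofinalFor₀

variable {H : Subgroup Γ}

theorem zero : IsCofinalFor₀ (0 : WithZero Γ) H :=
  fun _ _ => ⟨1, one_pos, by simp⟩

theorem mul_of_forall_pow_le {x b : WithZero Γ} (hx : IsCofinalFor₀ x H) {c : Γ} (hc : c ∈ H)
    (hb : ∀ n : ℕ, b ^ n ≤ c) : IsCofinalFor₀ (x * b) H := by
  intro h hh
  obtain ⟨n, hn, hlt⟩ := hx (h * c⁻¹) (H.mul_mem hh (H.inv_mem hc))
  refine ⟨n, hn, ?_⟩
  calc (x * b) ^ n = x ^ n * b ^ n := mul_pow x b n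
    _ ≤ x ^ n * c := by gcongr; exact hb n
    _ < ((h * c⁻¹ : Γ) : WithZero Γ) * c := mul_lt_mul_of_pos_right hlt (WithZero.zero_lt_coe _)
    _ = h := by rw [← WithZero.coe_mul, inv_mul_cancel_right]

theorem of_pow {x : WithZero Γ} {n : ℕ} (hn : 0 < n) (hx : IsCofinalFor₀ (x ^ n) H) :
    IsCofinalFor₀ x H := by
  intro h hh
  obtain ⟨m, hm, hlt⟩ := hx h hh
  exact ⟨n * m, Nat.mul_pos hn hm, by rwa [pow_mul]⟩

end IsCofinalFor₀

variable {A : Type*} [CommMonoidWithZero A]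

theorem isConvexSubgroup_charSubgroup (v : A → WithZero Γ) : IsConvexSubgroup (charSubgroup v) :=
  fun γ δ hγδ hδ hγ => Subgroup.mem_sInf.2 fun K hK => hK.1 γ δ hγδ hδ (Subgroup.mem_sInf.1 hγ K hK)

theorem mem_charSubgroup_of_one_le {v : A → WithZero Γ} {γ : Γ} {a : A} (hv : v a = γ)
    (hγ : 1 ≤ γ) : γ ∈ charSubgroup v :=
  Subgroup.mem_sInf.2 fun _ hK => hK.2 γ a hv hγ

theorem exists_mem_forall_pow_le_of_charSubgroup_lt {v : A → WithZero Γ} {H : Subgroup Γ}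
    (hchar : charSubgroup v < H) (a : A) : ∃ c ∈ H, ∀ n : ℕ, v a ^ n ≤ c := by
  rcases le_or_gt (v a) 1 with hle | hgt
  · exact ⟨1, H.one_mem, fun n => by simpa using pow_le_one' hle n⟩
  obtain ⟨γ, hγ⟩ := WithZero.ne_zero_iff_exists.1 (zero_lt_one.trans hgt).ne'
  have hγ1 : 1 ≤ γ := by exact_mod_cast (hγ ▸ hgt).le
  obtain ⟨g, hgH, hgK, hg⟩ := Subgroup.exists_mem_notMem_le_one_of_lt hchar
  refine ⟨g⁻¹, H.inv_mem hgH, fun n => ?_⟩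
  have hpow : γ ^ n ∈ charSubgroup v :=
    Subgroup.pow_mem _ (mem_charSubgroup_of_one_le hγ.symm hγ1) n
  rw [← hγ, ← WithZero.coe_pow]
  exact_mod_cast ((isConvexSubgroup_charSubgroup v).lt_inv_of_notMem hgK hg hpow).le

theorem map_pow_of_map_mul {M N : Type*} [Monoid M] [Monoid N] {f : M → N}
    (hmul : ∀ x y, f (x * y) = f x * f y) (x : M) {n : ℕ} (hn : 0 < n) : f (x ^ n) = f x ^ n := by
  induction n, hn using Nat.le_induction with
  | base => simp
  | succ n _ ih => rw [pow_succ, hmul, ih, ← pow_succ]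

end

theorem cofinal_set_is_radical_ideal_general {A Γ : Type*} [CommMonoidWithZero A]
    [CommGroup Γ] [LinearOrder Γ] [IsOrderedMonoid Γ] (v : A → WithZero Γ)
    (hzero : v 0 = 0) (hmul : ∀ x y : A, v (x * y) = v x * v y)
    (H : Subgroup Γ)
    (hchar : charSubgroup v < H) :
    IsMIdeal {x : A | IsCofinalFor₀ (v x) H} ∧
      {x : A | ∃ n : ℕ, 0 < n ∧ x ^ n ∈ {x : A | IsCofinalFor₀ (v x) H}} =
        {x : A | IsCofinalFor₀ (v x) H} := by
  refine ⟨⟨?_, fun x hx a => ?_⟩, Set.Subset.antisymm ?_ fun x hx => ⟨1, one_pos, by simpa⟩⟩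
  · show IsCofinalFor₀ (v 0) H
    exact hzero ▸ IsCofinalFor₀.zero
  · show IsCofinalFor₀ (v (x * a)) H
    obtain ⟨c, hcH, hc⟩ := exists_mem_forall_pow_le_of_charSubgroup_lt hchar a
    exact hmul x a ▸ IsCofinalFor₀.mul_of_forall_pow_le hx hcH hc
  · rintro x ⟨n, hn, hxn⟩
    have hxn : IsCofinalFor₀ (v x ^ n) H := map_pow_of_map_mul hmul x hn ▸ hxn
    exact hxn.of_pow hn

theorem cofinal_set_is_radical_ideal {A Γ : Type*} [CommMonoidWithZero A]
    [CommGroup Γ] [LinearOrder Γ] [IsOrderedMonoid Γ] (v : A → WithZero Γ)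
    (hzero : v 0 = 0) (hone : v 1 = 1) (hmul : ∀ x y : A, v (x * y) = v x * v y)
    (H : Subgroup Γ) (hconv : IsConvexSubgroup H)
    (hchar : charSubgroup v < H) (hlt : H < valueGroup v) :
    IsMIdeal {x : A | IsCofinalFor₀ (v x) H} ∧
      {x : A | ∃ n : ℕ, 0 < n ∧ x ^ n ∈ {x : A | IsCofinalFor₀ (v x) H}} =
        {x : A | IsCofinalFor₀ (v x) H} :=
  cofinal_set_is_radical_ideal_general v hzero hmul H hchar
end
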